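/- Let M be a compact oriented m-manifold with volume form μ, let c be an (m−2)-cycle in M, and suppose the closed 2-form η represents the Poincaré dual of the homology class [c]. Let P = I − β∘d : Ω^{m−2}(M) → Z^{m−2}(M) be a projection onto closed forms, where β is a continuous linear right inverse of d on exact (m−1)-forms. Then for all divergence-free X, Y: ω_η(X,Y) − ω_{c,P}(X,Y) = ∫_M η ∧ β(i_{[X,Y]}μ) and ω_c(X,Y) − ω_{c,P}(X,Y) = ∫_c β(i_{[X,Y]}μ), where ω_η(X,Y)=∫_M η(X,Y)μ, ω_c(X,Y)=∫_c i_X i_Y μ, ω_{c,P}(X,Y)=∫_c P(i_X i_Y μ). Consequently ω_η, ω_c and ω_{c,P} are pairwise cohomologous Lie algebra 2-cocycles on the divergence-free vector fields. -/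
import Mathlib


/-!
STATEMENT 6.  Abstract Cartan calculus (`m = n + 2`).  `intc` is integration
over an `(m−2)`-cycle `c` (so `∫_c dγ = 0`), and the closed 2-form `η`
represents the Poincaré dual of `[c]`: `∫_M η ∧ α = ∫_c α` for every closed
`(m−2)`-form `α` (`hPD`).  `β` is a continuous linear right inverse of `d` on
exact `(m−1)`-forms (`hβ`), and `P = I − β ∘ d` is the induced projection onto
closed `(m−2)`-forms.  With
  `ω_η(X,Y)   = ∫_M η(X,Y) μ`  (here `η(X,Y) = i_Y i_X η`),
  `ω_c(X,Y)   = ∫_c i_X i_Y μ`,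
  `ω_{c,P}(X,Y) = ∫_c P(i_X i_Y μ) = ∫_c (i_X i_Y μ − β(i_{[X,Y]} μ))`
(using `i_{[X,Y]} μ = d(i_X i_Y μ)`), for all divergence free `X, Y`:
  `ω_η(X,Y) − ω_{c,P}(X,Y) = ∫_M η ∧ β(i_{[X,Y]} μ)`,
  `ω_c(X,Y) − ω_{c,P}(X,Y) = ∫_c β(i_{[X,Y]} μ)`,
and consequently `ω_η`, `ω_c`, `ω_{c,P}` are pairwise cohomologous 2-cocycles
(their differences are of the form `λ∘[·,·]` for the explicit linear
functionals appearing on the right-hand sides). -/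
theorem lichnerowicz_cocycles_cohomologous
    {Vec : Type*} [LieRing Vec] [LieAlgebra ℝ Vec]
    {Form : ℕ → Type*} [∀ k, AddCommGroup (Form k)] [∀ k, Module ℝ (Form k)]
    (n : ℕ)
    (d : ∀ k, Form k →ₗ[ℝ] Form (k + 1))
    (ι : Vec → ∀ k, Form (k + 1) →ₗ[ℝ] Form k)
    (L : Vec → ∀ k, Form k →ₗ[ℝ] Form k)
    (w : ∀ k l, Form k →ₗ[ℝ] Form l →ₗ[ℝ] Form (l + k))
    (μ : Form (n + 2))
    (intM : Form (n + 2) →ₗ[ℝ] ℝ)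
    (intc : Form n →ₗ[ℝ] ℝ)
    (hd : ∀ k (α : Form k), d (k + 1) (d k α) = 0)
    (htop : ∀ γ : Form (n + 3), γ = 0)
    (hcartan : ∀ (X : Vec) (k) (α : Form (k + 1)),
      L X (k + 1) α = d k (ι X k α) + ι X (k + 1) (d (k + 1) α))
    (hLι : ∀ (X Y : Vec) (k) (α : Form (k + 1)),
      L X k (ι Y k α) = ι ⁅X, Y⁆ k α + ι Y k (L X (k + 1) α))
    -- c is a cycle: Stokes on c
    (hcycle : ∀ (k : ℕ) (h : k + 1 = n) (γ : Form k), intc (h ▸ d k γ) = 0)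
    -- the closed 2-form η is Poincaré dual to c:
    (η : Form 2) (hη : d 2 η = 0)
    (hPD : ∀ α : Form n, d n α = 0 → intM (w 2 n η α) = intc α)
    -- β : B^{m-1}(M) → Ω^{m-2}(M) is a linear right inverse of d on exact forms:
    (β : Form (n + 1) →ₗ[ℝ] Form n)
    (hβ : ∀ γ : Form n, d n (β (d n γ)) = d n γ)
    -- the identity ∫_M η(X,Y) μ = ∫_M η ∧ i_X i_Y μ (Statement 2):
    (hpair : ∀ X Y : Vec,
      intM (w 0 (n + 2) (ι Y 0 (ι X 1 η)) μ) = intM (w 2 n η (ι X n (ι Y (n + 1) μ))))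
    -- divergence free vector fields X, Y:
    (X Y : Vec) (hX : L X (n + 2) μ = 0) (hY : L Y (n + 2) μ = 0) :
    (intM (w 0 (n + 2) (ι Y 0 (ι X 1 η)) μ)
        - intc (ι X n (ι Y (n + 1) μ) - β (ι ⁅X, Y⁆ (n + 1) μ))
      = intM (w 2 n η (β (ι ⁅X, Y⁆ (n + 1) μ))))
    ∧ (intc (ι X n (ι Y (n + 1) μ))
        - intc (ι X n (ι Y (n + 1) μ) - β (ι ⁅X, Y⁆ (n + 1) μ))
      = intc (β (ι ⁅X, Y⁆ (n + 1) μ)))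
    ∧ (intM (w 0 (n + 2) (ι Y 0 (ι X 1 η)) μ) - intc (ι X n (ι Y (n + 1) μ))
      = intM (w 2 n η (β (ι ⁅X, Y⁆ (n + 1) μ))) - intc (β (ι ⁅X, Y⁆ (n + 1) μ))) := by
 
  set γ := ι X n (ι Y (n + 1) μ) with hγ
  set ξ := β (ι ⁅X, Y⁆ (n + 1) μ) with hξ
  have h1 : d (n + 1) (ι Y (n + 1) μ) = 0 := by
    have h := hcartan Y (n + 1) μ
    rw [hY, htop (d (n + 2) μ), map_zero, add_zero] at h
    exact h.symm
  have h2 : ι ⁅X, Y⁆ (n + 1) μ = d n γ := by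
    have ha := hLι X Y (n + 1) μ
    rw [hX, map_zero, add_zero] at ha
    have hb := hcartan X n (ι Y (n + 1) μ)
    rw [h1, map_zero, add_zero] at hb
    rw [← ha, hb]
  have h3 : d n (γ - ξ) = 0 := by
    rw [map_sub, hξ, h2, hβ, sub_self]
  have h4 : intM (w 2 n η (γ - ξ)) = intc (γ - ξ) := hPD _ h3
  have h5 : intM (w 0 (n + 2) (ι Y 0 (ι X 1 η)) μ) = intM (w 2 n η γ) := hpair X Y
  have h6 : intM (w 2 n η γ) - intM (w 2 n η ξ) = intc γ - intc ξ := by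
    have := h4
    rw [map_sub, map_sub, map_sub] at this
    linarith
  refine ⟨by rw [h5, map_sub]; linarith, by rw [map_sub]; ring, by rw [h5]; linarith⟩
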